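/- Let 2 ≤ d1 < d2 and let C be a Hermitian matrix on ℂ^{d1}⊗ℂ^{d2} whose eigenvalues in decreasing order have the form (λ1, λ, λ, …, λ, λ_{d1d2}), i.e. λ2 = λ3 = … = λ_{d1d2−1}. Then λ(tr_1[C]) ⊕ λ(tr_2[C]) ≺ λ(tr_1[Λ]) ⊕ λ(tr_2[Λ]), where Λ is the diagonal matrix on ℂ^{d1}⊗ℂ^{d2} whose diagonal lists the eigenvalues of C in decreasing order (with respect to the lexicographic index ordering). -/

import Mathlib

/-
Write `a = λ₁ ≥ b = λ₂ = ⋯ = λ_{N-1} ≥ λ_N` for the spectrum of `C`. All eigenvalues but `a` are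
at most `b`, so on any orthonormal family of `r` vectors the quadratic forms of `C` add up to at
most `r b + (a - b)` (Bessel's inequality for the top eigenvector). A sum of `k` eigenvalues of
`tr₁ C` is such a sum over the `k d₁` orthonormal vectors `eᵢ ⊗ f_s`, hence at most
`k d₁ b + (a - b)` when `k < d₂`, and equal to `tr C` when `k = d₂`. On the diagonal side every
entry of `Λ` other than the last one is at least `b`, so any `k` columns of `Λ` containing the
entry `a` but not the last entry reach this bound; such columns exist for `0 < k < d₂`. The same
holds for `tr₂`, and majorization of each block gives majorization of the concatenation.
-/

open Matrix Finset Kronecker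
open scoped ComplexOrder

/-- The first partial trace of a matrix on `ℂ^{d1} ⊗ ℂ^{d2}` (index pairs `(i,s)` ordered
lexicographically): `(tr_1 C)_{s,t} = ∑_i C_{(i,s),(i,t)}`. -/
noncomputable def ptrace1 {d1 d2 : ℕ} (C : Matrix (Fin d1 × Fin d2) (Fin d1 × Fin d2) ℂ) :
    Matrix (Fin d2) (Fin d2) ℂ :=
  Matrix.of fun s t => ∑ i : Fin d1, C (i, s) (i, t)

/-- The second partial trace: `(tr_2 C)_{i,j} = ∑_s C_{(i,s),(j,s)}`. -/
noncomputable def ptrace2 {d1 d2 : ℕ} (C : Matrix (Fin d1 × Fin d2) (Fin d1 × Fin d2) ℂ) :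
    Matrix (Fin d1) (Fin d1) ℂ :=
  Matrix.of fun i j => ∑ s : Fin d2, C (i, s) (j, s)

/-- The sum of the `k` largest entries of the vector `x` (the largest value of a sum of `k`
entries of `x`), i.e. `∑_{i=1}^k x_i^↓`. -/
noncomputable def maxSum {ι : Type*} [Fintype ι] (x : ι → ℝ) (k : ℕ) : ℝ :=
  sSup {s : ℝ | ∃ A : Finset ι, A.card = k ∧ s = ∑ i ∈ A, x i}

/-- `x ≺ y` (majorization): for every `k`, the sum of the `k` largest entries of `x` is at
most the sum of the `k` largest entries of `y`, and the total sums are equal. -/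
def Majorizes {ι κ : Type*} [Fintype ι] [Fintype κ] (x : ι → ℝ) (y : κ → ℝ) : Prop :=
  (∀ k : ℕ, maxSum x k ≤ maxSum y k) ∧ ∑ i, x i = ∑ j, y j

/-- `x ≺_w y` (weak majorization). -/
def WeakMajorizes {ι κ : Type*} [Fintype ι] [Fintype κ] (x : ι → ℝ) (y : κ → ℝ) : Prop :=
  ∀ k : ℕ, maxSum x k ≤ maxSum y k

open scoped InnerProductSpace

lemma Finset.card_mul_add_sub_le_sum {α : Type*} (S : Finset α) (w : α → ℝ) {a₀ : α}
    (ha₀ : a₀ ∈ S) {b : ℝ} (hw : ∀ a ∈ S, a ≠ a₀ → b ≤ w a) :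
    S.card * b + (w a₀ - b) ≤ ∑ a ∈ S, w a := by
  classical
  have hrest := card_nsmul_le_sum (S.erase a₀) w b fun a ha =>
    hw a (mem_of_mem_erase ha) (ne_of_mem_erase ha)
  rw [card_erase_of_mem ha₀, nsmul_eq_mul, Nat.cast_sub (card_pos.2 ⟨a₀, ha₀⟩)] at hrest
  rw [← add_sum_erase S w ha₀]
  push_cast at hrest
  linarith

section Majorization

variable {ι κ : Type*} [Fintype ι] [Fintype κ]

lemma finite_subsetSums (x : ι → ℝ) (k : ℕ) :
    {s : ℝ | ∃ A : Finset ι, A.card = k ∧ s = ∑ i ∈ A, x i}.Finite :=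
  (Set.finite_range fun A : Finset ι => ∑ i ∈ A, x i).subset
    (by rintro _ ⟨A, -, rfl⟩; exact ⟨A, rfl⟩)

lemma sum_le_maxSum (x : ι → ℝ) (A : Finset ι) : ∑ i ∈ A, x i ≤ maxSum x A.card :=
  le_csSup (finite_subsetSums x A.card).bddAbove ⟨A, rfl, rfl⟩

lemma exists_card_eq_sum_eq_maxSum (x : ι → ℝ) {k : ℕ} (hk : k ≤ Fintype.card ι) :
    ∃ A : Finset ι, A.card = k ∧ ∑ i ∈ A, x i = maxSum x k := by
  have hne : {s : ℝ | ∃ A : Finset ι, A.card = k ∧ s = ∑ i ∈ A, x i}.Nonempty := by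
    obtain ⟨A, -, hA⟩ := exists_subset_card_eq (s := univ) (by simpa using hk)
    exact ⟨_, A, hA, rfl⟩
  obtain ⟨A, hA, hsum⟩ := hne.csSup_mem (finite_subsetSums x k)
  exact ⟨A, hA, hsum.symm⟩

lemma maxSum_eq_zero_of_card_lt (x : ι → ℝ) {k : ℕ} (hk : Fintype.card ι < k) :
    maxSum x k = 0 := by
  have : {s : ℝ | ∃ A : Finset ι, A.card = k ∧ s = ∑ i ∈ A, x i} = ∅ :=
    Set.eq_empty_of_forall_notMem fun _ ⟨A, hA, _⟩ => (A.card_le_univ.trans_lt hk).ne hA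
  rw [maxSum, this, Real.sSup_empty]

theorem WeakMajorizes.sumElim {x₁ y₁ : ι → ℝ} {x₂ y₂ : κ → ℝ} (h₁ : WeakMajorizes x₁ y₁)
    (h₂ : WeakMajorizes x₂ y₂) : WeakMajorizes (Sum.elim x₁ x₂) (Sum.elim y₁ y₂) := by
  intro k
  obtain hk | hk := lt_or_ge (Fintype.card (ι ⊕ κ)) k
  · rw [maxSum_eq_zero_of_card_lt _ hk, maxSum_eq_zero_of_card_lt _ hk]
  obtain ⟨A, rfl, hA⟩ := exists_card_eq_sum_eq_maxSum (Sum.elim x₁ x₂) hk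
  obtain ⟨B₁, hB₁, hy₁⟩ := exists_card_eq_sum_eq_maxSum y₁ A.toLeft.card_le_univ
  obtain ⟨B₂, hB₂, hy₂⟩ := exists_card_eq_sum_eq_maxSum y₂ A.toRight.card_le_univ
  calc maxSum (Sum.elim x₁ x₂) A.card
      = ∑ i ∈ A.toLeft, x₁ i + ∑ j ∈ A.toRight, x₂ j := by
        rw [← hA, sum_sum_eq_sum_toLeft_add_sum_toRight]; rfl
    _ ≤ maxSum x₁ A.toLeft.card + maxSum x₂ A.toRight.card :=
        add_le_add (sum_le_maxSum _ _) (sum_le_maxSum _ _)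
    _ ≤ ∑ i ∈ B₁, y₁ i + ∑ j ∈ B₂, y₂ j := by
        rw [hy₁, hy₂]; exact add_le_add (h₁ _) (h₂ _)
    _ = ∑ i ∈ B₁.disjSum B₂, Sum.elim y₁ y₂ i := (sum_disjSum B₁ B₂ (Sum.elim y₁ y₂)).symm
    _ ≤ maxSum (Sum.elim y₁ y₂) A.card := by
        convert sum_le_maxSum (Sum.elim y₁ y₂) (B₁.disjSum B₂) using 2
        rw [card_disjSum, hB₁, hB₂, card_toLeft_add_card_toRight]

theorem Majorizes.sumElim {x₁ y₁ : ι → ℝ} {x₂ y₂ : κ → ℝ} (h₁ : Majorizes x₁ y₁)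
    (h₂ : Majorizes x₂ y₂) : Majorizes (Sum.elim x₁ x₂) (Sum.elim y₁ y₂) := by
  refine ⟨WeakMajorizes.sumElim h₁.1 h₂.1, ?_⟩
  simp only [Fintype.sum_sum_type, Sum.elim_inl, Sum.elim_inr, h₁.2, h₂.2]

theorem majorizes_of_forall_sum_le {x y : ι → ℝ} (f : ℕ → ℝ)
    (hx : ∀ A : Finset ι, A.Nonempty → A ≠ univ → ∑ i ∈ A, x i ≤ f A.card)
    (hy : ∀ p, 0 < p → p < Fintype.card ι → ∃ B : Finset ι, B.card = p ∧ f p ≤ ∑ i ∈ B, y i)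
    (hsum : ∑ i, x i = ∑ i, y i) : Majorizes x y := by
  refine ⟨fun k => ?_, hsum⟩
  obtain hk | hk := lt_or_ge (Fintype.card ι) k
  · rw [maxSum_eq_zero_of_card_lt _ hk, maxSum_eq_zero_of_card_lt _ hk]
  obtain ⟨A, rfl, hA⟩ := exists_card_eq_sum_eq_maxSum x hk
  rw [← hA]
  obtain rfl | hne := A.eq_empty_or_nonempty
  · simpa using sum_le_maxSum y ∅
  by_cases huniv : A = univ
  · subst huniv
    simpa [hsum] using sum_le_maxSum y univ
  obtain ⟨B, hB, hfB⟩ := hy A.card hne.card_pos (A.card_lt_iff_ne_univ.2 huniv)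
  exact (hx A hne huniv).trans (hfB.trans (hB ▸ sum_le_maxSum y B))

end Majorization

namespace Matrix.IsHermitian

variable {m : Type*} [Fintype m] [DecidableEq m] {A : Matrix m m ℂ} (hA : A.IsHermitian)
include hA

lemma toEuclideanLin_eigenvectorBasis (k : m) :
    toEuclideanLin A (hA.eigenvectorBasis k) = (hA.eigenvalues k : ℂ) • hA.eigenvectorBasis k := by
  ext j
  simpa using congrFun (hA.mulVec_eigenvectorBasis k) j

lemma re_inner_toEuclideanLin_eq_sum (v : EuclideanSpace ℂ m) :
    (⟪v, toEuclideanLin A v⟫_ℂ).re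
      = ∑ k, hA.eigenvalues k * ‖⟪hA.eigenvectorBasis k, v⟫_ℂ‖ ^ 2 := by
  rw [← hA.eigenvectorBasis.sum_inner_mul_inner, Complex.re_sum]
  refine sum_congr rfl fun k _ => ?_
  rw [← isSymmetric_toEuclideanLin_iff.mpr hA, hA.toEuclideanLin_eigenvectorBasis,
    inner_smul_left, Complex.conj_ofReal, ← inner_conj_symm, mul_left_comm,
    RCLike.conj_mul, Complex.re_ofReal_mul]
  norm_cast

lemma eigenvalues_eq_re_inner (k : m) :
    hA.eigenvalues k
      = (⟪hA.eigenvectorBasis k, toEuclideanLin A (hA.eigenvectorBasis k)⟫_ℂ).re := by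
  rw [hA.toEuclideanLin_eigenvectorBasis, inner_smul_right, inner_self_eq_norm_sq_to_K,
    hA.eigenvectorBasis.orthonormal.1 k]
  simp

lemma sum_eigenvalues_eq_re_trace : ∑ k, hA.eigenvalues k = A.trace.re := by
  simp [hA.trace_eq_sum_eigenvalues]

variable {b : ℝ} {k₀ : m} (hk₀ : ∀ k, k ≠ k₀ → hA.eigenvalues k ≤ b)
include hk₀

lemma re_inner_toEuclideanLin_le (v : EuclideanSpace ℂ m) :
    (⟪v, toEuclideanLin A v⟫_ℂ).re
      ≤ b * ‖v‖ ^ 2 + (hA.eigenvalues k₀ - b) * ‖⟪hA.eigenvectorBasis k₀, v⟫_ℂ‖ ^ 2 := by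
  set w := fun k => ‖⟪hA.eigenvectorBasis k, v⟫_ℂ‖ ^ 2
  have hrest : ∑ k ∈ univ.erase k₀, (hA.eigenvalues k - b) * w k ≤ 0 :=
    sum_nonpos fun k hk =>
      mul_nonpos_of_nonpos_of_nonneg (sub_nonpos.2 (hk₀ k (ne_of_mem_erase hk)))
        (by positivity)
  calc (⟪v, toEuclideanLin A v⟫_ℂ).re
      = ∑ k, (b * w k + (hA.eigenvalues k - b) * w k) := by
        rw [hA.re_inner_toEuclideanLin_eq_sum]; exact sum_congr rfl fun k _ => by ring
    _ = b * ‖v‖ ^ 2 + ((hA.eigenvalues k₀ - b) * w k₀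
          + ∑ k ∈ univ.erase k₀, (hA.eigenvalues k - b) * w k) := by
        rw [sum_add_distrib, ← mul_sum, hA.eigenvectorBasis.sum_sq_norm_inner_right,
          add_sum_erase _ (fun k => (hA.eigenvalues k - b) * w k) (mem_univ k₀)]
    _ ≤ b * ‖v‖ ^ 2 + (hA.eigenvalues k₀ - b) * w k₀ := by linarith

lemma sum_re_inner_toEuclideanLin_le (hb : b ≤ hA.eigenvalues k₀) {α : Type*} (F : Finset α)
    {v : α → EuclideanSpace ℂ m} (hv : Orthonormal ℂ v) :
    ∑ x ∈ F, (⟪v x, toEuclideanLin A (v x)⟫_ℂ).re ≤ F.card * b + (hA.eigenvalues k₀ - b) := by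
  have hBessel := hv.sum_inner_products_le (hA.eigenvectorBasis k₀) (s := F)
  rw [(hA.eigenvectorBasis.orthonormal.1 k₀), one_pow] at hBessel
  calc ∑ x ∈ F, (⟪v x, toEuclideanLin A (v x)⟫_ℂ).re
      ≤ ∑ x ∈ F, (b + (hA.eigenvalues k₀ - b) * ‖⟪v x, hA.eigenvectorBasis k₀⟫_ℂ‖ ^ 2) := by
        refine sum_le_sum fun x _ => ?_
        simpa [hv.1 x, norm_inner_symm] using hA.re_inner_toEuclideanLin_le hk₀ (v x)
    _ = F.card * b
          + (hA.eigenvalues k₀ - b) * ∑ x ∈ F, ‖⟪v x, hA.eigenvectorBasis k₀⟫_ℂ‖ ^ 2 := by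
        rw [sum_add_distrib, ← mul_sum, sum_const, nsmul_eq_mul]
    _ ≤ F.card * b + (hA.eigenvalues k₀ - b) := by
        gcongr
        exact mul_le_of_le_one_right (sub_nonneg.2 hb) hBessel

end Matrix.IsHermitian

lemma inner_toEuclideanLin_eq_sum {m : Type*} [Fintype m] [DecidableEq m] (C : Matrix m m ℂ)
    (x y : EuclideanSpace ℂ m) :
    ⟪x, toEuclideanLin C y⟫_ℂ = ∑ p, ∑ q, starRingEnd ℂ (x p) * C p q * y q := by
  simp only [PiLp.inner_apply, RCLike.inner_apply, toLpLin_apply, mulVec, dotProduct, sum_mul]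
  exact sum_congr rfl fun p _ => sum_congr rfl fun q _ => by ring

section PartialTrace

variable {ι κ m : Type*}

/-- The partial trace over the first factor of `m ≃ ι × κ`; `ptrace1` and `ptrace2` are the cases
`e = Equiv.refl _` and `e = Equiv.prodComm _ _`. -/
def partialTrace [Fintype ι] (e : ι × κ ≃ m) (C : Matrix m m ℂ) : Matrix κ κ ℂ :=
  of fun s t => ∑ i, C (e (i, s)) (e (i, t))

/-- The vector `eᵢ ⊗ f`, transported along `e`. -/
def singleTmul [DecidableEq ι] (e : ι × κ ≃ m) (i : ι) (f : EuclideanSpace ℂ κ) :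
    EuclideanSpace ℂ m :=
  WithLp.toLp 2 fun p => if (e.symm p).1 = i then f (e.symm p).2 else 0

@[simp] lemma singleTmul_apply [DecidableEq ι] (e : ι × κ ≃ m) (i : ι) (f : EuclideanSpace ℂ κ)
    (q : ι × κ) : singleTmul e i f (e q) = if q.1 = i then f q.2 else 0 := by
  simp [singleTmul]

variable [Fintype ι] [Fintype κ] [Fintype m]

lemma trace_partialTrace (e : ι × κ ≃ m) (C : Matrix m m ℂ) :
    (partialTrace e C).trace = C.trace := by
  simp only [trace, diag_apply, partialTrace, of_apply]
  exact (Fintype.sum_prod_type_right _).symm.trans (e.sum_comp fun p => C p p)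

variable [DecidableEq ι]

lemma inner_singleTmul (e : ι × κ ≃ m) (i j : ι) (f g : EuclideanSpace ℂ κ) :
    ⟪singleTmul e i f, singleTmul e j g⟫_ℂ = if i = j then ⟪f, g⟫_ℂ else 0 := by
  rw [PiLp.inner_apply, ← e.sum_comp, Fintype.sum_prod_type, PiLp.inner_apply]
  simp only [singleTmul_apply]
  split_ifs with hij
  · subst hij; simp
  · simp [Ne.symm hij]

lemma orthonormal_singleTmul (e : ι × κ ≃ m) {α : Type*} {f : α → EuclideanSpace ℂ κ}
    (hf : Orthonormal ℂ f) : Orthonormal ℂ fun p : α × ι => singleTmul e p.2 (f p.1) := by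
  classical
  rw [orthonormal_iff_ite] at hf ⊢
  rintro ⟨a, i⟩ ⟨b, j⟩
  rw [inner_singleTmul, hf]
  by_cases hij : i = j <;> by_cases hab : a = b <;> simp [hij, hab]

lemma inner_singleTmul_toEuclideanLin [DecidableEq m] (e : ι × κ ≃ m) (C : Matrix m m ℂ)
    (i : ι) (f : EuclideanSpace ℂ κ) :
    ⟪singleTmul e i f, toEuclideanLin C (singleTmul e i f)⟫_ℂ
      = ∑ s, ∑ t, starRingEnd ℂ (f s) * C (e (i, s)) (e (i, t)) * f t := by
  simp only [inner_toEuclideanLin_eq_sum, ← e.sum_comp, Fintype.sum_prod_type, singleTmul_apply]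
  simp [apply_ite (starRingEnd ℂ), ite_mul]

variable [DecidableEq κ] [DecidableEq m]

lemma sum_inner_singleTmul (e : ι × κ ≃ m) (C : Matrix m m ℂ) (f : EuclideanSpace ℂ κ) :
    ∑ i, ⟪singleTmul e i f, toEuclideanLin C (singleTmul e i f)⟫_ℂ
      = ⟪f, toEuclideanLin (partialTrace e C) f⟫_ℂ := by
  simp only [inner_singleTmul_toEuclideanLin]
  simp only [inner_toEuclideanLin_eq_sum, partialTrace, of_apply, mul_sum, sum_mul]
  rw [sum_comm]
  exact sum_congr rfl fun _ _ => sum_comm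

theorem sum_eigenvalues_partialTrace_le (e : ι × κ ≃ m) {C : Matrix m m ℂ} (hC : C.IsHermitian)
    (hT : (partialTrace e C).IsHermitian) {b : ℝ} {k₀ : m}
    (hk₀ : ∀ k, k ≠ k₀ → hC.eigenvalues k ≤ b) (hb : b ≤ hC.eigenvalues k₀) (S : Finset κ) :
    ∑ s ∈ S, hT.eigenvalues s ≤ (S.card * Fintype.card ι : ℕ) * b + (hC.eigenvalues k₀ - b) := by
  calc ∑ s ∈ S, hT.eigenvalues s
      = ∑ p ∈ S ×ˢ univ, (⟪singleTmul e p.2 (hT.eigenvectorBasis p.1),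
          toEuclideanLin C (singleTmul e p.2 (hT.eigenvectorBasis p.1))⟫_ℂ).re := by
        rw [sum_product]
        refine sum_congr rfl fun s _ => ?_
        rw [hT.eigenvalues_eq_re_inner, ← sum_inner_singleTmul, Complex.re_sum]
    _ ≤ (S ×ˢ (univ : Finset ι)).card * b + (hC.eigenvalues k₀ - b) :=
        hC.sum_re_inner_toEuclideanLin_le hk₀ hb _
          (orthonormal_singleTmul e hT.eigenvectorBasis.orthonormal)
    _ = (S.card * Fintype.card ι : ℕ) * b + (hC.eigenvalues k₀ - b) := by
        rw [card_product, card_univ]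

theorem majorizes_partialTrace (e : ι × κ ≃ m) {C : Matrix m m ℂ} (hC : C.IsHermitian)
    (hT : (partialTrace e C).IsHermitian) {b : ℝ} {k₀ : m}
    (hk₀ : ∀ k, k ≠ k₀ → hC.eigenvalues k ≤ b) (hb : b ≤ hC.eigenvalues k₀)
    (w : ι × κ → ℝ) {p₀ p₁ : ι × κ} (hp₀ : w p₀ = hC.eigenvalues k₀)
    (hw : ∀ p, p ≠ p₁ → b ≤ w p) (hp : p₀.2 ≠ p₁.2) (hsum : ∑ p, w p = ∑ k, hC.eigenvalues k) :
    Majorizes hT.eigenvalues fun s => ∑ i, w (i, s) := by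
  refine majorizes_of_forall_sum_le
    (fun n => (n * Fintype.card ι : ℕ) * b + (hC.eigenvalues k₀ - b))
    (fun S _ _ => sum_eigenvalues_partialTrace_le e hC hT hk₀ hb S) (fun n hn hnκ => ?_) ?_
  · obtain ⟨B, hp₀B, hBp₁, hB⟩ := exists_subsuperset_card_eq (n := n)
      (singleton_subset_iff.2 (mem_erase.2 ⟨hp, mem_univ p₀.2⟩))
      (by rw [card_singleton]; exact hn)
      (by simpa [card_erase_of_mem] using Nat.le_sub_one_of_lt hnκ)
    refine ⟨B, hB, ?_⟩
    calc ((n * Fintype.card ι : ℕ) : ℝ) * b + (hC.eigenvalues k₀ - b)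
        = (univ ×ˢ B).card * b + (w p₀ - b) := by
          rw [hp₀, card_product, hB, card_univ, mul_comm n]
      _ ≤ ∑ q ∈ univ ×ˢ B, w q :=
          card_mul_add_sub_le_sum _ w
            (mem_product.2 ⟨mem_univ _, singleton_subset_iff.1 hp₀B⟩)
            fun q hq _ => hw q fun hq₁ => by
              simpa [hq₁] using hBp₁ (mem_product.1 hq).2
      _ = ∑ s ∈ B, ∑ i, w (i, s) := sum_product_right _ _ _
  · rw [hT.sum_eigenvalues_eq_re_trace, trace_partialTrace, ← hC.sum_eigenvalues_eq_re_trace,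
      ← hsum, Fintype.sum_prod_type_right]

end PartialTrace

lemma Antitone.apply_one_le_of_middle_eq {N : ℕ} {μ : Fin N → ℝ} (hμ : Antitone μ) (hN : 3 ≤ N)
    (hmid : ∀ i j : Fin N, 1 ≤ (i : ℕ) → (i : ℕ) ≤ N - 2 → 1 ≤ (j : ℕ) → (j : ℕ) ≤ N - 2 →
      μ i = μ j) (k : Fin N) (hk : k ≠ ⟨N - 1, by omega⟩) : μ ⟨1, by omega⟩ ≤ μ k :=
  (hmid _ ⟨N - 2, by omega⟩ le_rfl (show 1 ≤ N - 2 by omega) (show 1 ≤ N - 2 by omega)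
    le_rfl).trans_le (hμ (Fin.le_def.2 (show (k : ℕ) ≤ N - 2 by
      have : (k : ℕ) ≠ N - 1 := Fin.val_ne_of_ne hk
      omega)))

lemma finProdFinEquiv_last {m n : ℕ} (hm : 0 < m) (hn : 0 < n) :
    finProdFinEquiv ((⟨m - 1, by omega⟩, ⟨n - 1, by omega⟩) : Fin m × Fin n)
      = ⟨m * n - 1, by have := Nat.mul_pos hm hn; omega⟩ := by
  obtain ⟨a, rfl⟩ := Nat.exists_eq_add_of_le' hm
  obtain ⟨b, rfl⟩ := Nat.exists_eq_add_of_le' hn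
  ext
  simp only [finProdFinEquiv_apply_val, Nat.add_sub_cancel]
  ring_nf
  omega

theorem sufficient_case_different_dimensions (d1 d2 : ℕ) (hd1 : 2 ≤ d1) (hdd : d1 < d2)
    (C : Matrix (Fin d1 × Fin d2) (Fin d1 × Fin d2) ℂ) (hC : C.IsHermitian)
    (htr1 : (ptrace1 C).IsHermitian) (htr2 : (ptrace2 C).IsHermitian)
    -- `μ` lists the eigenvalues of `C` in decreasing order
    (μ : Fin (d1 * d2) → ℝ) (hμ : Antitone μ)
    (g : Fin (d1 * d2) ≃ Fin d1 × Fin d2) (hg : ∀ k, μ k = hC.eigenvalues (g k))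
    -- `λ_2 = λ_3 = … = λ_{d1·d2 - 1}` (`μ` is 0-indexed)
    (hmid : ∀ i j : Fin (d1 * d2), 1 ≤ (i : ℕ) → (i : ℕ) ≤ d1 * d2 - 2 →
      1 ≤ (j : ℕ) → (j : ℕ) ≤ d1 * d2 - 2 → μ i = μ j) :
    Majorizes (Sum.elim htr1.eigenvalues htr2.eigenvalues)
      (Sum.elim (fun s : Fin d2 => ∑ i : Fin d1, μ (finProdFinEquiv (i, s)))
                (fun j : Fin d1 => ∑ s : Fin d2, μ (finProdFinEquiv (j, s)))) := by
  have hn : 6 ≤ d1 * d2 := by nlinarith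
  have hk₀ : ∀ k, k ≠ g ⟨0, by omega⟩ → hC.eigenvalues k ≤ μ ⟨1, by omega⟩ := fun k hk =>
    g.apply_symm_apply k ▸ hg (g.symm k) ▸
      hμ (Fin.le_def.2 (Nat.pos_of_ne_zero fun h => hk (g.symm_apply_eq.1 (Fin.ext h))))
  have hb : μ ⟨1, by omega⟩ ≤ hC.eigenvalues (g ⟨0, by omega⟩) :=
    hg _ ▸ hμ (Fin.le_def.2 (Nat.zero_le 1))
  have hw := hμ.apply_one_le_of_middle_eq (by omega) hmid
  have hlast := finProdFinEquiv_last (by omega : 0 < d1) (by omega : 0 < d2)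
  have hsum : ∑ p, μ (finProdFinEquiv p) = ∑ k, hC.eigenvalues k := by
    rw [finProdFinEquiv.sum_comp μ, ← g.sum_comp]
    exact Fintype.sum_congr _ _ hg
  exact Majorizes.sumElim
    (majorizes_partialTrace (Equiv.refl _) hC htr1 hk₀ hb (fun p => μ (finProdFinEquiv p))
      (p₀ := (⟨0, by omega⟩, ⟨0, by omega⟩)) (p₁ := (⟨d1 - 1, by omega⟩, ⟨d2 - 1, by omega⟩))
      (hg _) (fun p hp => hw _ (hlast ▸ finProdFinEquiv.injective.ne hp))
      (Fin.ne_of_val_ne (show 0 ≠ d2 - 1 by omega)) hsum)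
    (majorizes_partialTrace (Equiv.prodComm _ _) hC htr2 hk₀ hb
      (fun p => μ (finProdFinEquiv p.swap))
      (p₀ := (⟨0, by omega⟩, ⟨0, by omega⟩)) (p₁ := (⟨d2 - 1, by omega⟩, ⟨d1 - 1, by omega⟩))
      (hg _) (fun p hp => hw _ (hlast ▸ finProdFinEquiv.injective.ne (Prod.swap_injective.ne hp)))
      (Fin.ne_of_val_ne (show 0 ≠ d1 - 1 by omega))
      ((Equiv.prodComm _ _).sum_comp _ |>.trans hsum))
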